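/- Let (1_X, g, h) be a map of triangles from a distinguished triangle X →u Y →v Z →w ΣX to a distinguished triangle X →u' Y' →v' Z' →w' ΣX whose first component is the identity of X. Then the middle square (with maps v, g, h, v') is homotopy cartesian for some differential if and only if the candidate triangle Y →(g,v)ᵀ Y'⊕Z →[v', −h] Z' →(Σu)∘w' ΣY is replaceably exact. -/

import Mathlib

open CategoryTheory Category Limits Pretriangulated

universe v u

variable {C : Type u} [Category.{v} C] [Preadditive C] [HasZeroObject C]
  [HasShift C ℤ] [∀ n : ℤ, (shiftFunctor C n).Additive] [Pretriangulated C]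
  [IsTriangulated C] [HasBinaryBiproducts C]

noncomputable local instance (n : ℤ) : PreservesBinaryBiproducts (shiftFunctor C n) :=
  preservesBinaryBiproducts_of_preservesBiproducts _

/-- The condition that `(f, g, h)` is a morphism of triangles from `T` to `T'`. -/
def IsTriMap (T T' : Triangle C) (f : T.obj₁ ⟶ T'.obj₁) (g : T.obj₂ ⟶ T'.obj₂)
    (h : T.obj₃ ⟶ T'.obj₃) : Prop :=
  T.mor₁ ≫ g = f ≫ T'.mor₁ ∧ T.mor₂ ≫ h = g ≫ T'.mor₂ ∧
    T.mor₃ ≫ f⟦(1 : ℤ)⟧' = h ≫ T'.mor₃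

/-- The mapping cone of a morphism of triangles. -/
noncomputable def mappingCone (T T' : Triangle C) (f : T.obj₁ ⟶ T'.obj₁)
    (g : T.obj₂ ⟶ T'.obj₂) (h : T.obj₃ ⟶ T'.obj₃) : Triangle C :=
  Triangle.mk
    (biprod.desc (biprod.lift T'.mor₁ 0) (biprod.lift g (-T.mor₂)) :
      T'.obj₁ ⊞ T.obj₂ ⟶ T'.obj₂ ⊞ T.obj₃)
    (biprod.desc (biprod.lift T'.mor₂ 0) (biprod.lift h (-T.mor₃)) :
      T'.obj₂ ⊞ T.obj₃ ⟶ T'.obj₃ ⊞ T.obj₁⟦(1 : ℤ)⟧)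
    (biprod.desc (biprod.lift T'.mor₃ 0)
        (biprod.lift (f⟦(1 : ℤ)⟧') (-(T.mor₁⟦(1 : ℤ)⟧'))) ≫
      ((shiftFunctor C (1 : ℤ)).mapBiprod T'.obj₁ T.obj₂).inv)

/-- A morphism of triangles is good if its mapping cone is distinguished. -/
noncomputable def IsGood (T T' : Triangle C) (f : T.obj₁ ⟶ T'.obj₁)
    (g : T.obj₂ ⟶ T'.obj₂) (h : T.obj₃ ⟶ T'.obj₃) : Prop :=
  mappingCone T T' f g h ∈ distTriang C

/-- An octahedron on composable maps `a`, `b`, given distinguished triangles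
`(a, p₁, q₁)`, `(b, p₂, q₂)` and `(a ≫ b, p₃, q₃)`, is a pair `(m, n)` as below. -/
def IsOctahedron {A₁ A₂ A₃ B₁ B₂ B₃ : C} (a : A₁ ⟶ A₂) (b : A₂ ⟶ A₃)
    (p₁ : A₂ ⟶ B₁) (q₁ : B₁ ⟶ A₁⟦(1 : ℤ)⟧)
    (p₂ : A₃ ⟶ B₂) (q₂ : B₂ ⟶ A₂⟦(1 : ℤ)⟧)
    (p₃ : A₃ ⟶ B₃) (q₃ : B₃ ⟶ A₁⟦(1 : ℤ)⟧)
    (m : B₁ ⟶ B₃) (n : B₃ ⟶ B₂) : Prop :=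
  p₁ ≫ m = b ≫ p₃ ∧ m ≫ q₃ = q₁ ∧ p₃ ≫ n = p₂ ∧ n ≫ q₂ = q₃ ≫ a⟦(1 : ℤ)⟧' ∧
    (Triangle.mk m n (q₂ ≫ p₁⟦(1 : ℤ)⟧') ∈ distTriang C)

/-- A morphism of triangles `(f, g, h)` is Verdier good if `h` arises from Verdier's
construction via two octahedra on the composite `g ∘ u = u' ∘ f`. -/
def IsVerdierGood (T T' : Triangle C) (f : T.obj₁ ⟶ T'.obj₁) (g : T.obj₂ ⟶ T'.obj₂)
    (h : T.obj₃ ⟶ T'.obj₃) : Prop :=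
  ∃ (A Y'' X'' : C) (vt : T'.obj₂ ⟶ A) (wt : A ⟶ T.obj₁⟦(1 : ℤ)⟧)
    (g' : T'.obj₂ ⟶ Y'') (g'' : Y'' ⟶ T.obj₂⟦(1 : ℤ)⟧)
    (f' : T'.obj₁ ⟶ X'') (f'' : X'' ⟶ T.obj₁⟦(1 : ℤ)⟧)
    (α₁ : T.obj₃ ⟶ A) (β₁ : A ⟶ Y'') (α₂ : X'' ⟶ A) (β₂ : A ⟶ T'.obj₃),
    (Triangle.mk (T.mor₁ ≫ g) vt wt ∈ distTriang C) ∧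
    (Triangle.mk g g' g'' ∈ distTriang C) ∧
    (Triangle.mk f f' f'' ∈ distTriang C) ∧
    IsOctahedron T.mor₁ g T.mor₂ T.mor₃ g' g'' vt wt α₁ β₁ ∧
    IsOctahedron f T'.mor₁ f' f'' T'.mor₂ T'.mor₃ vt wt α₂ β₂ ∧
    h = α₁ ≫ β₂

/-- The morphism of triangles `(f, g, h)` is nullhomotopic, in the (equivalent)
`Σ`-applied formulation of the first equation. -/
def IsNullHomotopic (T T' : Triangle C) (f : T.obj₁ ⟶ T'.obj₁) (g : T.obj₂ ⟶ T'.obj₂)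
    (h : T.obj₃ ⟶ T'.obj₃) : Prop :=
  ∃ (F : T.obj₂ ⟶ T'.obj₁) (G : T.obj₃ ⟶ T'.obj₂) (H : T.obj₁⟦(1 : ℤ)⟧ ⟶ T'.obj₃),
    f⟦(1 : ℤ)⟧' = T.mor₁⟦(1 : ℤ)⟧' ≫ F⟦(1 : ℤ)⟧' + H ≫ T'.mor₃ ∧
    g = T.mor₂ ≫ G + F ≫ T'.mor₁ ∧
    h = T.mor₃ ≫ H + G ≫ T'.mor₂

/-- A triangle is contractible if its identity morphism is nullhomotopic. -/
def IsContractible (T : Triangle C) : Prop :=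
  IsNullHomotopic T T (𝟙 T.obj₁) (𝟙 T.obj₂) (𝟙 T.obj₃)

/-- A morphism of triangles is middling good if it extends to a 4 × 4 diagram. -/
def IsMiddlingGood (T T' : Triangle C) (f : T.obj₁ ⟶ T'.obj₁) (g : T.obj₂ ⟶ T'.obj₂)
    (h : T.obj₃ ⟶ T'.obj₃) : Prop :=
  ∃ (X'' Y'' Z'' : C)
    (f' : T'.obj₁ ⟶ X'') (f'' : X'' ⟶ T.obj₁⟦(1 : ℤ)⟧)
    (g' : T'.obj₂ ⟶ Y'') (g'' : Y'' ⟶ T.obj₂⟦(1 : ℤ)⟧)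
    (h' : T'.obj₃ ⟶ Z'') (h'' : Z'' ⟶ T.obj₃⟦(1 : ℤ)⟧)
    (u'' : X'' ⟶ Y'') (v'' : Y'' ⟶ Z'') (w'' : Z'' ⟶ X''⟦(1 : ℤ)⟧),
    (Triangle.mk f f' f'' ∈ distTriang C) ∧
    (Triangle.mk g g' g'' ∈ distTriang C) ∧
    (Triangle.mk h h' h'' ∈ distTriang C) ∧
    (Triangle.mk u'' v'' w'' ∈ distTriang C) ∧
    T'.mor₁ ≫ g' = f' ≫ u'' ∧
    T'.mor₂ ≫ h' = g' ≫ v'' ∧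
    T'.mor₃ ≫ f'⟦(1 : ℤ)⟧' = h' ≫ w'' ∧
    u'' ≫ g'' = f'' ≫ T.mor₁⟦(1 : ℤ)⟧' ∧
    v'' ≫ h'' = g'' ≫ T.mor₂⟦(1 : ℤ)⟧' ∧
    h'' ≫ T.mor₃⟦(1 : ℤ)⟧' = -(w'' ≫ f''⟦(1 : ℤ)⟧')

/-- A candidate triangle `(a, b, c)` is replaceably exact if each of its three maps
can be replaced to give a distinguished triangle. -/
def ReplaceablyExact {A B D : C} (a : A ⟶ B) (b : B ⟶ D) (c : D ⟶ A⟦(1 : ℤ)⟧) : Prop :=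
  (∃ a' : A ⟶ B, Triangle.mk a' b c ∈ distTriang C) ∧
  (∃ b' : B ⟶ D, Triangle.mk a b' c ∈ distTriang C) ∧
  (∃ c' : D ⟶ A⟦(1 : ℤ)⟧, Triangle.mk a b c' ∈ distTriang C)


private def negIsoSelf (A : C) : A ≅ A := ⟨-𝟙 A, -𝟙 A, by simp, by simp⟩

/-- The shift by `1` of a distinguished triangle is distinguished (with a sign on
the third map). -/
lemma shift_one_dist {A B D : C} (f : A ⟶ B) (g : B ⟶ D) (k : D ⟶ A⟦(1 : ℤ)⟧)
    (hT : Triangle.mk f g k ∈ distTriang C) :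
    Triangle.mk (f⟦(1 : ℤ)⟧') (g⟦(1 : ℤ)⟧') (-k⟦(1 : ℤ)⟧') ∈ distTriang C := by
  refine isomorphic_distinguished _
    (rot_of_distTriang _ (rot_of_distTriang _ (rot_of_distTriang _ hT))) _ ?_
  refine Triangle.isoMk _ _ (negIsoSelf _) (Iso.refl _) (negIsoSelf _) ?_ ?_ ?_
  · show f⟦(1 : ℤ)⟧' ≫ 𝟙 _ = (-𝟙 _) ≫ (-f⟦(1 : ℤ)⟧')
    simp
  · show g⟦(1 : ℤ)⟧' ≫ (-𝟙 _) = 𝟙 _ ≫ (-g⟦(1 : ℤ)⟧')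
    simp
  · show (-k⟦(1 : ℤ)⟧') ≫ (-𝟙 (A⟦(1 : ℤ)⟧))⟦(1 : ℤ)⟧' = (-𝟙 _) ≫ (-k⟦(1 : ℤ)⟧')
    simp

theorem stmt_10 {X Y Z Y' Z' : C}
    (u : X ⟶ Y) (v : Y ⟶ Z) (w : Z ⟶ X⟦(1 : ℤ)⟧)
    (u' : X ⟶ Y') (v' : Y' ⟶ Z') (w' : Z' ⟶ X⟦(1 : ℤ)⟧)
    (hT : Triangle.mk u v w ∈ distTriang C)
    (hT' : Triangle.mk u' v' w' ∈ distTriang C)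
    (g : Y ⟶ Y') (h : Z ⟶ Z')
    (hmap : IsTriMap (Triangle.mk u v w) (Triangle.mk u' v' w') (𝟙 X) g h) :
    (∃ dd : Z' ⟶ Y⟦(1 : ℤ)⟧,
      Triangle.mk (biprod.lift g v) (biprod.desc v' (-h)) dd ∈ distTriang C) ↔
      ReplaceablyExact (biprod.lift g v) (biprod.desc v' (-h)) (w' ≫ u⟦(1 : ℤ)⟧') := by
  obtain ⟨hm1, hm2, hm3⟩ := hmap
  change u ≫ g = 𝟙 X ≫ u' at hm1
  change v ≫ h = g ≫ v' at hm2
  change w ≫ (𝟙 X)⟦(1 : ℤ)⟧' = h ≫ w' at hm3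
  rw [id_comp] at hm1
  simp only [CategoryTheory.Functor.map_id, comp_id] at hm3
  -- hm1 : u ≫ g = u', hm2 : v ≫ h = g ≫ v', hm3 : w = h ≫ w'
  constructor
  · rintro ⟨dd, hdd⟩
    have h31 : w ≫ u⟦(1 : ℤ)⟧' = 0 := comp_distTriang_mor_zero₃₁ _ hT
    have h12 : Triangle.mk w' (-u'⟦(1 : ℤ)⟧') (-v'⟦(1 : ℤ)⟧') ∈ distTriang C :=
      rot_of_distTriang _ (rot_of_distTriang _ hT')
    have h23 : Triangle.mk (u⟦(1 : ℤ)⟧') (v⟦(1 : ℤ)⟧') (-w⟦(1 : ℤ)⟧') ∈ distTriang C :=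
      shift_one_dist u v w hT
    obtain ⟨V, p, q, hV⟩ := distinguished_cocone_triangle (w' ≫ u⟦(1 : ℤ)⟧')
    let O := Triangulated.someOctahedron rfl h12 h23 hV
    have hz : (Triangle.mk O.m₁ O.m₃
        ((-w⟦(1 : ℤ)⟧') ≫ (-u'⟦(1 : ℤ)⟧')⟦(1 : ℤ)⟧')).mor₃ = 0 := by
      have hwu : w ≫ u'⟦(1 : ℤ)⟧' = 0 := by
        rw [← hm1, Functor.map_comp, ← Category.assoc, h31, zero_comp]
      show (-w⟦(1 : ℤ)⟧') ≫ (-u'⟦(1 : ℤ)⟧')⟦(1 : ℤ)⟧' = 0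
      rw [Functor.map_neg, Preadditive.neg_comp, Preadditive.comp_neg, neg_neg, ← Functor.map_comp, hwu,
        Functor.map_zero]
    obtain ⟨e₀, he1₀, he2₀⟩ := exists_iso_binaryBiproduct_of_distTriang _ O.mem hz
    obtain ⟨eh, ei, hei, hie, he1, he2⟩ :
        ∃ (eh : V ⟶ Y'⟦(1 : ℤ)⟧ ⊞ Z⟦(1 : ℤ)⟧) (ei : Y'⟦(1 : ℤ)⟧ ⊞ Z⟦(1 : ℤ)⟧ ⟶ V),
          eh ≫ ei = 𝟙 V ∧ ei ≫ eh = 𝟙 _ ∧ O.m₁ ≫ eh = biprod.inl ∧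
            O.m₃ = eh ≫ biprod.snd :=
      ⟨e₀.hom, e₀.inv, e₀.hom_inv_id, e₀.inv_hom_id, he1₀, he2₀⟩
    have hm1e : biprod.inl ≫ ei = O.m₁ := by rw [← he1, assoc, hei, comp_id]
    have hsnd : ei ≫ O.m₃ = biprod.snd := by rw [he2, ← assoc, hie, id_comp]
    have hp2 : (p ≫ eh) ≫ biprod.snd = v⟦(1 : ℤ)⟧' := by
      rw [assoc, ← he2]; exact O.comm₃
    have hq1 : biprod.inl ≫ (ei ≫ q) = -v'⟦(1 : ℤ)⟧' := by
      rw [← assoc, hm1e]; exact O.comm₂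
    have hvtu : u⟦(1 : ℤ)⟧' ≫ ((p ≫ eh) ≫ biprod.fst) = -u'⟦(1 : ℤ)⟧' := by
      have hc1 : (-u'⟦(1 : ℤ)⟧') ≫ O.m₁ = u⟦(1 : ℤ)⟧' ≫ p := O.comm₁
      calc u⟦(1 : ℤ)⟧' ≫ ((p ≫ eh) ≫ biprod.fst)
          = ((u⟦(1 : ℤ)⟧' ≫ p) ≫ eh) ≫ biprod.fst := by simp only [assoc]
        _ = (-u'⟦(1 : ℤ)⟧') ≫ (O.m₁ ≫ eh) ≫ biprod.fst := by
            rw [← hc1]; simp only [assoc]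
        _ = -u'⟦(1 : ℤ)⟧' := by rw [he1, biprod.inl_fst, comp_id]
    have hrw : (biprod.inr ≫ (ei ≫ q)) ≫ w'⟦(1 : ℤ)⟧' = -w⟦(1 : ℤ)⟧' := by
      have hc4 : q ≫ w'⟦(1 : ℤ)⟧' = O.m₃ ≫ (-w⟦(1 : ℤ)⟧') := O.comm₄
      calc (biprod.inr ≫ (ei ≫ q)) ≫ w'⟦(1 : ℤ)⟧'
          = biprod.inr ≫ ei ≫ (q ≫ w'⟦(1 : ℤ)⟧') := by simp only [assoc]
        _ = biprod.inr ≫ (ei ≫ O.m₃) ≫ (-w⟦(1 : ℤ)⟧') := by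
            rw [hc4]; simp only [assoc]
        _ = -w⟦(1 : ℤ)⟧' := by rw [hsnd, biprod.inr_snd_assoc]
    -- produce η₀ : Z ⟶ Y'
    have hx0 : u⟦(1 : ℤ)⟧' ≫ (((p ≫ eh) ≫ biprod.fst) + g⟦(1 : ℤ)⟧') = 0 := by
      rw [Preadditive.comp_add, hvtu, ← Functor.map_comp, hm1, neg_add_cancel]
    have hux : u ≫ (shiftFunctor C (1 : ℤ)).preimage
        (((p ≫ eh) ≫ biprod.fst) + g⟦(1 : ℤ)⟧') = 0 := by
      apply (shiftFunctor C (1 : ℤ)).map_injective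
      rw [Functor.map_comp, Functor.map_preimage, Functor.map_zero, hx0]
    obtain ⟨(η₀ : Z ⟶ Y'), hη₀⟩ := Triangle.yoneda_exact₂ _ hT _ hux
    have hvt : ((p ≫ eh) ≫ biprod.fst) + g⟦(1 : ℤ)⟧'
        = v⟦(1 : ℤ)⟧' ≫ η₀⟦(1 : ℤ)⟧' := by
      have h5 := congrArg (shiftFunctor C (1 : ℤ)).map hη₀
      simp only [Functor.map_preimage, Functor.map_comp] at h5
      exact h5.trans (Functor.map_comp _ _ _)
    -- produce y₀ : Z ⟶ Y'
    have hx1 : ((biprod.inr ≫ (ei ≫ q)) + h⟦(1 : ℤ)⟧') ≫ w'⟦(1 : ℤ)⟧' = 0 := by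
      rw [Preadditive.add_comp, hrw, ← Functor.map_comp, ← hm3, neg_add_cancel]
    have hx1' : (shiftFunctor C (1 : ℤ)).preimage
        ((biprod.inr ≫ (ei ≫ q)) + h⟦(1 : ℤ)⟧') ≫ w' = 0 := by
      apply (shiftFunctor C (1 : ℤ)).map_injective
      rw [Functor.map_comp, Functor.map_preimage, Functor.map_zero, hx1]
    obtain ⟨(y₀ : Z ⟶ Y'), hy₀⟩ := Triangle.coyoneda_exact₃ _ hT' _ hx1'
    have hri : (biprod.inr ≫ (ei ≫ q)) + h⟦(1 : ℤ)⟧'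
        = y₀⟦(1 : ℤ)⟧' ≫ v'⟦(1 : ℤ)⟧' := by
      have h6 := congrArg (shiftFunctor C (1 : ℤ)).map hy₀
      simp only [Functor.map_preimage, Functor.map_comp] at h6
      exact h6.trans (Functor.map_comp _ _ _)
    -- the distinguished triangle, twisted by an involution of the biproduct
    have key : ∀ η : Z⟦(1 : ℤ)⟧ ⟶ Y'⟦(1 : ℤ)⟧,
        Triangle.mk (w' ≫ u⟦(1 : ℤ)⟧')
          ((p ≫ eh) ≫ biprod.desc biprod.inl (biprod.lift (-η) (-𝟙 _)))
          (biprod.desc biprod.inl (biprod.lift (-η) (-𝟙 _)) ≫ (ei ≫ q))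
          ∈ distTriang C := by
      intro η
      have hN : Triangle.mk (w' ≫ u⟦(1 : ℤ)⟧') (p ≫ eh) (ei ≫ q)
          ∈ distTriang C := by
        refine isomorphic_distinguished _ hV _ ?_
        refine Triangle.isoMk _ _ (Iso.refl _) (Iso.refl _) ⟨ei, eh, hie, hei⟩ ?_ ?_ ?_
        · show (w' ≫ u⟦(1 : ℤ)⟧') ≫ 𝟙 _ = 𝟙 _ ≫ (w' ≫ u⟦(1 : ℤ)⟧')
          simp
        · show (p ≫ eh) ≫ ei = 𝟙 _ ≫ p; rw [id_comp, assoc, hei, comp_id]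
        · show (ei ≫ q) ≫ (𝟙 _)⟦(1 : ℤ)⟧' = ei ≫ q; simp only [CategoryTheory.Functor.map_id, comp_id]
      have hee : biprod.desc biprod.inl (biprod.lift (-η) (-𝟙 _)) ≫
          biprod.desc biprod.inl (biprod.lift (-η) (-𝟙 _)) = 𝟙 _ := by
        apply biprod.hom_ext' <;> apply biprod.hom_ext <;>
          simp [biprod.lift_desc, Preadditive.comp_neg, Preadditive.neg_comp]
      refine isomorphic_distinguished _ hN _ ?_
      refine Triangle.isoMk _ _ (Iso.refl _) (Iso.refl _)
        ⟨biprod.desc biprod.inl (biprod.lift (-η) (-𝟙 _)),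
         biprod.desc biprod.inl (biprod.lift (-η) (-𝟙 _)), hee, hee⟩ ?_ ?_ ?_
      · show (w' ≫ u⟦(1 : ℤ)⟧') ≫ 𝟙 _ = 𝟙 _ ≫ (w' ≫ u⟦(1 : ℤ)⟧')
        simp
      · show ((p ≫ eh) ≫ biprod.desc biprod.inl (biprod.lift (-η) (-𝟙 _))) ≫ biprod.desc biprod.inl (biprod.lift (-η) (-𝟙 _)) = 𝟙 _ ≫ (p ≫ eh); rw [id_comp, assoc, hee, comp_id]
      · show (biprod.desc biprod.inl (biprod.lift (-η) (-𝟙 _)) ≫ (ei ≫ q)) ≫ (𝟙 _)⟦(1 : ℤ)⟧' = biprod.desc biprod.inl (biprod.lift (-η) (-𝟙 _)) ≫ (ei ≫ q); simp only [CategoryTheory.Functor.map_id, comp_id]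
    have hpe : p ≫ eh = biprod.lift ((p ≫ eh) ≫ biprod.fst) (v⟦(1 : ℤ)⟧') := by
      apply biprod.hom_ext
      · simp
      · simp [hp2]
    have heq : ei ≫ q
        = biprod.desc (-v'⟦(1 : ℤ)⟧') (biprod.inr ≫ (ei ≫ q)) := by
      apply biprod.hom_ext'
      · simp [hq1]
      · simp
    refine ⟨?_, ?_, ⟨dd, hdd⟩⟩
    · -- replace the first map, fixing b and c
      refine ⟨(shiftFunctor C (1 : ℤ)).preimage
        (-(((p ≫ eh) ≫ biprod.desc biprod.inl
            (biprod.lift (-y₀⟦(1 : ℤ)⟧') (-𝟙 _))) ≫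
          ((shiftFunctor C (1 : ℤ)).mapBiprod Y' Z).inv)), ?_⟩
      rw [rotate_distinguished_triangle, rotate_distinguished_triangle]
      refine isomorphic_distinguished _ (key (y₀⟦(1 : ℤ)⟧')) _ ?_
      refine Triangle.isoMk _ _ (Iso.refl _) (Iso.refl _)
        ((shiftFunctor C (1 : ℤ)).mapBiprod Y' Z) ?_ ?_ ?_
      · show (w' ≫ u⟦(1 : ℤ)⟧') ≫ 𝟙 _ = 𝟙 _ ≫ (w' ≫ u⟦(1 : ℤ)⟧')
        simp
      · show (-((shiftFunctor C (1 : ℤ)).preimage (-(((p ≫ eh) ≫ biprod.desc biprod.inl (biprod.lift (-y₀⟦(1 : ℤ)⟧') (-𝟙 _))) ≫ ((shiftFunctor C (1 : ℤ)).mapBiprod Y' Z).inv)))⟦(1 : ℤ)⟧') ≫ ((shiftFunctor C (1 : ℤ)).mapBiprod Y' Z).hom = 𝟙 _ ≫ ((p ≫ eh) ≫ biprod.desc biprod.inl (biprod.lift (-y₀⟦(1 : ℤ)⟧') (-𝟙 _)))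
        simp only [Triangle.rotate_mor₁, Triangle.rotate_mor₂, Triangle.rotate_mor₃,
          Triangle.mk_mor₁, Triangle.mk_mor₂, Triangle.mk_mor₃, Triangle.mk_obj₁,
          Triangle.mk_obj₂, Triangle.mk_obj₃, Iso.refl_hom, id_comp, comp_id,
          CategoryTheory.Functor.map_id]
        rw [Functor.map_preimage, neg_neg]
        simp only [assoc, Iso.inv_hom_id, comp_id]
      · have h7 : biprod.inr ≫ ei ≫ q
            = y₀⟦(1 : ℤ)⟧' ≫ v'⟦(1 : ℤ)⟧' - h⟦(1 : ℤ)⟧' := by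
          rw [← hri]; abel
        show (-(biprod.desc v' (-h))⟦(1 : ℤ)⟧') ≫ (𝟙 _)⟦(1 : ℤ)⟧' = ((shiftFunctor C (1 : ℤ)).mapBiprod Y' Z).hom ≫ (biprod.desc biprod.inl (biprod.lift (-y₀⟦(1 : ℤ)⟧') (-𝟙 _)) ≫ (ei ≫ q))
        simp only [Triangle.rotate_mor₁, Triangle.rotate_mor₂, Triangle.rotate_mor₃,
          Triangle.mk_mor₁, Triangle.mk_mor₂, Triangle.mk_mor₃, Triangle.mk_obj₁,
          Triangle.mk_obj₂, Triangle.mk_obj₃, Iso.refl_hom, id_comp, comp_id,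
          CategoryTheory.Functor.map_id]
        rw [← cancel_epi ((shiftFunctor C (1 : ℤ)).mapBiprod Y' Z).inv,
          Preadditive.comp_neg, biprod.mapBiprod_inv_map_desc, Iso.inv_hom_id_assoc]
        apply biprod.hom_ext'
        · simp only [Preadditive.comp_neg, biprod.inl_desc, biprod.inl_desc_assoc]
          rw [hq1]
        · rw [biprod.inr_desc_assoc, heq, biprod.lift_desc, h7]
          simp only [Preadditive.comp_neg, biprod.inr_desc, Preadditive.neg_comp,
            neg_neg, id_comp, Functor.map_neg]
          abel
    · -- replace the second map, fixing a and c
      have hA : (p ≫ eh) ≫ biprod.desc biprod.inl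
          (biprod.lift (-η₀⟦(1 : ℤ)⟧') (-𝟙 _))
          = biprod.lift (-g⟦(1 : ℤ)⟧') (-v⟦(1 : ℤ)⟧') := by
        have h7 : (p ≫ eh) ≫ biprod.fst
            = v⟦(1 : ℤ)⟧' ≫ η₀⟦(1 : ℤ)⟧' - g⟦(1 : ℤ)⟧' := by
          rw [← hvt]; abel
        rw [hpe, biprod.lift_desc, h7]
        apply biprod.hom_ext
        · simp only [Preadditive.add_comp, assoc, biprod.inl_fst, comp_id,
            biprod.lift_fst, Preadditive.comp_neg, Preadditive.neg_comp,
            Preadditive.sub_comp, id_comp, neg_neg]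
          abel
        · simp
      refine ⟨(shiftFunctor C (1 : ℤ)).preimage
        (-(((shiftFunctor C (1 : ℤ)).mapBiprod Y' Z).hom ≫
          (biprod.desc biprod.inl (biprod.lift (-η₀⟦(1 : ℤ)⟧') (-𝟙 _)) ≫
            (ei ≫ q)))), ?_⟩
      rw [rotate_distinguished_triangle, rotate_distinguished_triangle]
      refine isomorphic_distinguished _ (key (η₀⟦(1 : ℤ)⟧')) _ ?_
      refine Triangle.isoMk _ _ (Iso.refl _) (Iso.refl _)
        ((shiftFunctor C (1 : ℤ)).mapBiprod Y' Z) ?_ ?_ ?_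
      · show (w' ≫ u⟦(1 : ℤ)⟧') ≫ 𝟙 _ = 𝟙 _ ≫ (w' ≫ u⟦(1 : ℤ)⟧')
        simp
      · show (-(biprod.lift g v)⟦(1 : ℤ)⟧') ≫ ((shiftFunctor C (1 : ℤ)).mapBiprod Y' Z).hom = 𝟙 _ ≫ ((p ≫ eh) ≫ biprod.desc biprod.inl (biprod.lift (-η₀⟦(1 : ℤ)⟧') (-𝟙 _)))
        simp only [Triangle.rotate_mor₁, Triangle.rotate_mor₂, Triangle.rotate_mor₃,
          Triangle.mk_mor₁, Triangle.mk_mor₂, Triangle.mk_mor₃, Triangle.mk_obj₁,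
          Triangle.mk_obj₂, Triangle.mk_obj₃, Iso.refl_hom, id_comp, comp_id,
          CategoryTheory.Functor.map_id]
        rw [hA, Preadditive.neg_comp, biprod.map_lift_mapBiprod]
        apply biprod.hom_ext
        · simp
        · simp
      · show (-((shiftFunctor C (1 : ℤ)).preimage (-(((shiftFunctor C (1 : ℤ)).mapBiprod Y' Z).hom ≫ (biprod.desc biprod.inl (biprod.lift (-η₀⟦(1 : ℤ)⟧') (-𝟙 _)) ≫ (ei ≫ q)))))⟦(1 : ℤ)⟧') ≫ (𝟙 _)⟦(1 : ℤ)⟧' = ((shiftFunctor C (1 : ℤ)).mapBiprod Y' Z).hom ≫ (biprod.desc biprod.inl (biprod.lift (-η₀⟦(1 : ℤ)⟧') (-𝟙 _)) ≫ (ei ≫ q))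
        simp only [Triangle.rotate_mor₁, Triangle.rotate_mor₂, Triangle.rotate_mor₃,
          Triangle.mk_mor₁, Triangle.mk_mor₂, Triangle.mk_mor₃, Triangle.mk_obj₁,
          Triangle.mk_obj₂, Triangle.mk_obj₃, Iso.refl_hom, id_comp, comp_id,
          CategoryTheory.Functor.map_id]
        rw [Functor.map_preimage, neg_neg]
  · rintro ⟨-, -, c', hc'⟩
    exact ⟨c', hc'⟩
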